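/- Reduction of the marginal controlled effects to the standard marginal treatment effect under SUTVA (Corollary 3.10, items 3–4): assume m(d,d',u) = m̃(d,u) for all d' (the outcome does not depend on the peer's treatment) and V₁ is independent of the pair (V₀,U). Then for every (p₀,p₁) ∈ (0,1)²: (i) the iterated mixed second partial derivative ∂²F¹/∂p∂q exists at (p₀,p₁) and equals 0, so the identified marginal controlled spillover effect MCSE^{(1)}(p₀,p₁) is zero; and (ii) the iterated mixed second partial derivative ∂²G¹/∂p∂q exists at (p₀,p₁) and equals φ̃₁(p₀) − φ̃₀(p₀), so the identified marginal controlled direct effect MCDE^{(1)}(p₀,p₁) equals the standard marginal treatment effect 𝔼[Y(1) − Y(0) | V₀ = p₀] and does not depend on p₁. -/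

import Mathlib

/-!
Under SUTVA the two terms of `F¹` recombine into `Φ₁(p)`, where `Φ_d(p) = 𝔼[m̃(d,U)·1{V₀ ≤ p}]`,
so `F¹` does not depend on `q`. In `G¹`, independence of `V₁` from `(V₀,U)` and uniformity of `V₁`
factor each term as its `V₁`-free part times `q`, giving
`G¹(p,q) = (Φ₁(p) + 𝔼[m̃(0,U)] − Φ₀(p))·q`. The `q`-derivative is the bracket, and since
`Φ_d(p) = ∫₀^p φ̃_d` the fundamental theorem of calculus gives its `p`-derivative
`φ̃₁(p₀) − φ̃₀(p₀)`.
-/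

open MeasureTheory ProbabilityTheory Set Filter Topology

lemma volume_Iic_inter_Ioo_zero_one {q : ℝ} (hq : q ∈ Icc (0 : ℝ) 1) :
    volume (Iic q ∩ Ioo 0 1) = ENNReal.ofReal q := by
  refine le_antisymm ?_ ?_
  · calc volume (Iic q ∩ Ioo 0 1) ≤ volume (Ioc 0 q) :=
          measure_mono fun x hx => ⟨hx.2.1, hx.1⟩
      _ = ENNReal.ofReal q := by simp
  · calc ENNReal.ofReal q = volume (Ioo 0 q) := by simp
      _ ≤ volume (Iic q ∩ Ioo 0 1) :=
          measure_mono fun x hx => ⟨hx.2.le, hx.1, hx.2.trans_le hq.2⟩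

section

variable {Ω : Type*}

lemma mul_boole_eq_indicator (f : Ω → ℝ) (P : Ω → Prop) [DecidablePred P] :
    (fun ω => f ω * if P ω then 1 else 0) = {ω | P ω}.indicator f := by
  ext ω
  simp only [mul_boole, Set.indicator_apply, Set.mem_ofPred_eq]

variable [MeasurableSpace Ω] {μ : Measure Ω}

lemma MeasureTheory.Integrable.mul_boole {f : Ω → ℝ} (hf : Integrable f μ)
    {P : Ω → Prop} [DecidablePred P] (hP : MeasurableSet {ω | P ω}) :
    Integrable (fun ω => f ω * if P ω then 1 else 0) μ := by
  rw [mul_boole_eq_indicator]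
  exact hf.indicator hP

lemma integral_mul_boole (f : Ω → ℝ) {P : Ω → Prop} [DecidablePred P]
    (hP : MeasurableSet {ω | P ω}) :
    ∫ ω, f ω * (if P ω then 1 else 0) ∂μ = ∫ ω in {ω | P ω}, f ω ∂μ := by
  rw [mul_boole_eq_indicator, integral_indicator hP]

lemma integral_mul_boole_le_add_integral_mul_boole_lt {f : Ω → ℝ} (hf : Integrable f μ)
    {V : Ω → ℝ} (hV : Measurable V) (q : ℝ) :
    (∫ ω, f ω * (if V ω ≤ q then 1 else 0) ∂μ) + ∫ ω, f ω * (if q < V ω then 1 else 0) ∂μ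
      = ∫ ω, f ω ∂μ := by
  have hle : MeasurableSet {ω | V ω ≤ q} := measurableSet_le hV measurable_const
  have hlt : {ω | q < V ω} = {ω | V ω ≤ q}ᶜ := by ext; simp
  rw [integral_mul_boole f hle, integral_mul_boole f (measurableSet_lt measurable_const hV), hlt,
    integral_add_compl hle hf]

lemma integral_boole_le_of_map_eq_uniform {V : Ω → ℝ} (hV : Measurable V)
    (hunif : μ.map V = volume.restrict (Ioo 0 1)) {q : ℝ} (hq : q ∈ Icc (0 : ℝ) 1) :
    ∫ ω, (if V ω ≤ q then (1 : ℝ) else 0) ∂μ = q := by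
  have h := integral_mul_boole (μ := μ) (fun _ => (1 : ℝ))
    (measurableSet_le hV (measurable_const (a := q)))
  simp only [one_mul] at h
  rw [h, setIntegral_const, smul_eq_mul, mul_one, measureReal_def]
  change (μ (V ⁻¹' Iic q)).toReal = q
  rw [← Measure.map_apply hV measurableSet_Iic, hunif, Measure.restrict_apply measurableSet_Iic,
    volume_Iic_inter_Ioo_zero_one hq, ENNReal.toReal_ofReal hq.1]

lemma ProbabilityTheory.IndepFun.integral_mul_boole_le_of_map_eq_uniform {X V : Ω → ℝ}
    (hXV : IndepFun X V μ) (hX : AEStronglyMeasurable X μ) (hV : Measurable V)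
    (hunif : μ.map V = volume.restrict (Ioo 0 1)) {q : ℝ} (hq : q ∈ Icc (0 : ℝ) 1) :
    ∫ ω, X ω * (if V ω ≤ q then 1 else 0) ∂μ = (∫ ω, X ω ∂μ) * q := by
  have hind : Measurable fun v : ℝ => if v ≤ q then (1 : ℝ) else 0 :=
    Measurable.ite measurableSet_Iic measurable_const measurable_const
  conv_rhs => rw [← integral_boole_le_of_map_eq_uniform hV hunif hq]
  exact (hXV.comp measurable_id hind).integral_mul_eq_mul_integral hX
    (hind.comp hV).aestronglyMeasurable

lemma ProbabilityTheory.IndepFun.integral_comp_mul_boole_mul_boole_le {𝒰 : Type*}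
    [MeasurableSpace 𝒰] {U : Ω → 𝒰} {W V : Ω → ℝ} (hVWU : IndepFun V (fun ω => (W ω, U ω)) μ)
    (hU : Measurable U) (hW : Measurable W) (hV : Measurable V)
    (hunif : μ.map V = volume.restrict (Ioo 0 1)) {f : 𝒰 → ℝ} (hf : Measurable f)
    {P : ℝ → Prop} [DecidablePred P] (hP : MeasurableSet {x | P x}) {q : ℝ}
    (hq : q ∈ Icc (0 : ℝ) 1) :
    ∫ ω, f (U ω) * (if P (W ω) then 1 else 0) * (if V ω ≤ q then 1 else 0) ∂μ
      = (∫ ω, f (U ω) * (if P (W ω) then 1 else 0) ∂μ) * q := by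
  have hg : Measurable fun x : ℝ × 𝒰 => f x.2 * if P x.1 then 1 else 0 :=
    (hf.comp measurable_snd).mul
      ((Measurable.ite hP measurable_const measurable_const).comp measurable_fst)
  exact (hVWU.symm.comp hg measurable_id).integral_mul_boole_le_of_map_eq_uniform
    (hg.comp (hW.prodMk hU)).aestronglyMeasurable hV hunif hq

end

lemma hasDerivAt_of_eq_setIntegral_Ioc {φ Φ : ℝ → ℝ} {a b x : ℝ}
    (hφ : IntegrableOn φ (Ioc a b)) (hΦ : ∀ p ∈ Ioc a b, Φ p = ∫ u in Ioc a p, φ u)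
    (hx : x ∈ Ioo a b) (hcont : ContinuousAt φ x) : HasDerivAt Φ (φ x) x := by
  have hFTC : HasDerivAt (fun p => ∫ u in a..p, φ u) (φ x) x := by
    refine intervalIntegral.integral_hasDerivAt_right ?_
      ⟨Ioc a b, Ioc_mem_nhds hx.1 hx.2, hφ.aestronglyMeasurable⟩ hcont
    exact (intervalIntegrable_iff_integrableOn_Ioc_of_le hx.1.le).2
      (hφ.mono_set (Ioc_subset_Ioc_right hx.2.le))
  refine hFTC.congr_of_eventuallyEq ?_
  filter_upwards [Ioo_mem_nhds hx.1 hx.2] with p hp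
  rw [hΦ p (Ioo_subset_Ioc_self hp), intervalIntegral.integral_of_le hp.1.le]

lemma ContinuousOn.integrableOn_Ioc_of_abs_le {φ : ℝ → ℝ} {a b B : ℝ}
    (hφ : ContinuousOn φ (Ioo a b)) (hB : ∀ u ∈ Ioo a b, |φ u| ≤ B) :
    IntegrableOn φ (Ioc a b) := by
  rw [integrableOn_Ioc_iff_integrableOn_Ioo]
  exact .of_bound measure_Ioo_lt_top (hφ.aestronglyMeasurable measurableSet_Ioo) B
    (ae_restrict_of_forall_mem measurableSet_Ioo hB)

theorem sutva_reduction_to_mte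
    {Ω 𝒰 : Type*} [MeasurableSpace Ω] [MeasurableSpace 𝒰]
    (μ : Measure Ω) [IsProbabilityMeasure μ]
    (U : Ω → 𝒰) (V₀ V₁ : Ω → ℝ)
    (hU : Measurable U) (hV₀ : Measurable V₀) (hV₁ : Measurable V₁)
    -- V₀, V₁ uniformly distributed on (0,1)
    (hV₁unif : Measure.map V₁ μ = volume.restrict (Set.Ioo (0:ℝ) 1))
    -- bounded measurable outcome function (`true` codes treatment 1, `false` codes 0)
    (m : Bool → Bool → 𝒰 → ℝ)
    -- SUTVA: the outcome does not depend on the peer's treatment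
    (mt : Bool → 𝒰 → ℝ) (hmt : ∀ d, Measurable (mt d))
    (hmt_bdd : ∃ B, ∀ d u, |mt d u| ≤ B)
    (hSUTVA : ∀ d d' u, m d d' u = mt d u)
    -- V₁ independent of the pair (V₀, U)
    (hV₁indep : IndepFun V₁ (fun ω => (V₀ ω, U ω)) μ)
    -- continuous bounded version φ̃_d of p ↦ 𝔼[Y(d) | V₀ = p]
    (φt : Bool → ℝ → ℝ)
    (hφt_cont : ∀ d, ContinuousOn (φt d) (Set.Ioo (0:ℝ) 1))
    (hφt_bdd : ∃ B, ∀ d u, |φt d u| ≤ B)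
    (hφt : ∀ d, ∀ p ∈ Set.Ioc (0:ℝ) 1,
      (∫ ω, mt d (U ω) * (if V₀ ω ≤ p then (1:ℝ) else 0) ∂μ)
        = ∫ u in Set.Ioc (0:ℝ) p, φt d u)
    -- identified conditional-mean functions F¹ and G¹
    (F1 : ℝ → ℝ → ℝ)
    (hF1 : ∀ p q, F1 p q =
      (∫ ω, m true true (U ω) * (if V₀ ω ≤ p then (1:ℝ) else 0)
        * (if V₁ ω ≤ q then (1:ℝ) else 0) ∂μ)
      + ∫ ω, m true false (U ω) * (if V₀ ω ≤ p then (1:ℝ) else 0)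
        * (if q < V₁ ω then (1:ℝ) else 0) ∂μ)
    (G1 : ℝ → ℝ → ℝ)
    (hG1 : ∀ p q, G1 p q =
      (∫ ω, m true true (U ω) * (if V₀ ω ≤ p then (1:ℝ) else 0)
        * (if V₁ ω ≤ q then (1:ℝ) else 0) ∂μ)
      + ∫ ω, m false true (U ω) * (if p < V₀ ω then (1:ℝ) else 0)
        * (if V₁ ω ≤ q then (1:ℝ) else 0) ∂μ)
    -- the evaluation point
    (p₀ p₁ : ℝ) (hp₀ : p₀ ∈ Set.Ioo (0:ℝ) 1) (hp₁ : p₁ ∈ Set.Ioo (0:ℝ) 1) :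
    -- (i) the iterated mixed second partial derivative of F¹ exists and is zero: MCSE¹ = 0
    (∃ DFq : ℝ → ℝ,
      (∀ᶠ p in nhds p₀, HasDerivAt (fun q => F1 p q) (DFq p) p₁) ∧
      HasDerivAt DFq 0 p₀) ∧
    -- (ii) the iterated mixed second partial derivative of G¹ exists and equals the
    -- standard marginal treatment effect φ̃₁(p₀) − φ̃₀(p₀), which does not depend on p₁
    (∃ DGq : ℝ → ℝ,
      (∀ᶠ p in nhds p₀, HasDerivAt (fun q => G1 p q) (DGq p) p₁) ∧
      HasDerivAt DGq (φt true p₀ - φt false p₀) p₀) := by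
  obtain ⟨B, hB⟩ := hmt_bdd
  obtain ⟨Bφ, hBφ⟩ := hφt_bdd
  set Φ : Bool → ℝ → ℝ := fun d p => ∫ ω, mt d (U ω) * (if V₀ ω ≤ p then (1:ℝ) else 0) ∂μ
  have hY (d : Bool) : Integrable (fun ω => mt d (U ω)) μ :=
    .of_bound ((hmt d).comp hU).aestronglyMeasurable B (ae_of_all _ fun ω => hB d (U ω))
  have hF (p q : ℝ) : F1 p q = Φ true p := by
    simp only [hF1, hSUTVA]
    exact integral_mul_boole_le_add_integral_mul_boole_lt
      ((hY true).mul_boole (measurableSet_le hV₀ measurable_const)) hV₁ q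
  have hYgt (d : Bool) (p : ℝ) :
      ∫ ω, mt d (U ω) * (if p < V₀ ω then 1 else 0) ∂μ = (∫ ω, mt d (U ω) ∂μ) - Φ d p :=
    eq_sub_of_add_eq' (integral_mul_boole_le_add_integral_mul_boole_lt (hY d) hV₀ p)
  have hG (p : ℝ) : ∀ q ∈ Icc (0 : ℝ) 1,
      G1 p q = (Φ true p + ((∫ ω, mt false (U ω) ∂μ) - Φ false p)) * q := by
    intro q hq
    simp only [hG1, hSUTVA]
    rw [hV₁indep.integral_comp_mul_boole_mul_boole_le hU hV₀ hV₁ hV₁unif (hmt true)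
        (P := (· ≤ p)) measurableSet_Iic hq,
      hV₁indep.integral_comp_mul_boole_mul_boole_le hU hV₀ hV₁ hV₁unif (hmt false)
        (P := (p < ·)) measurableSet_Ioi hq, hYgt]
    ring
  have hΦ (d : Bool) : HasDerivAt (Φ d) (φt d p₀) p₀ :=
    hasDerivAt_of_eq_setIntegral_Ioc
      ((hφt_cont d).integrableOn_Ioc_of_abs_le fun u _ => hBφ d u) (hφt d) hp₀
      ((hφt_cont d).continuousAt (Ioo_mem_nhds hp₀.1 hp₀.2))
  refine ⟨⟨fun _ => 0, ?_, hasDerivAt_const p₀ 0⟩,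
    ⟨fun p => Φ true p + ((∫ ω, mt false (U ω) ∂μ) - Φ false p), ?_, ?_⟩⟩
  · refine .of_forall fun p => ?_
    simpa only [hF] using hasDerivAt_const p₁ (Φ true p)
  · refine .of_forall fun p => ?_
    refine ((hasDerivAt_id p₁).const_mul _ |>.congr_of_eventuallyEq ?_).congr_deriv (mul_one _)
    filter_upwards [Icc_mem_nhds hp₁.1 hp₁.2] with q hq
    exact hG p q hq
  · exact ((hΦ true).add ((hΦ false).const_sub _)).congr_deriv (sub_eq_add_neg _ _).symm
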